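/- Let S be a finite set, let R be a non-empty subset of S, and let K be a positive real number. Suppose: (a) for every z ∈ R there is a family (C_z^1, C_z^2, …, C_z^{n_z}) with n_z ≥ 3 of pairwise disjoint non-empty subsets of S, none of which contains z, and each satisfying |C_z^i| ≥ K; and (b) for all z, z' ∈ R, writing C_z = ∪_{i=1}^{n_z} C_z^i, at least one of the following holds: (i) ({z} ∪ C_z) ∩ ({z'} ∪ C_{z'}) = ∅; (ii) there exist i ∈ {1,…,n_z} and j ∈ {1,…,n_{z'}} such that ({z'} ∪ C_{z'}) \ C_{z'}^j ⊆ C_z^i and ({z} ∪ C_z) \ C_z^i ⊆ C_{z'}^j; (iii) there exists i ∈ {1,…,n_z} such that {z'} ∪ C_{z'} ⊆ C_z^i; (iv) there exists j ∈ {1,…,n_{z'}} such that {z} ∪ C_z ⊆ C_{z'}^j. Then |S| ≥ K(|R| + 2). -/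

import Mathlib

/-!
Call a piece `C z i` free if it contains no point of `R`. Free pieces of distinct centres are
disjoint, so `S` contains at least `K` times as many points as there are free pieces, and it
suffices to find `|R| + 2` of them. This goes by induction on `R`: take an occupied piece of
minimal size and a centre `z₀ ∈ R` inside it. Compatibility forces all pieces of `z₀` but one
into that piece, so by minimality `z₀` has at least two free pieces; and removing `z₀` from `R`
frees at most one further piece altogether.
-/

open Finset

section

variable {α : Type*} [DecidableEq α]

theorem Finset.mul_card_le_card_of_pairwiseDisjoint {ι : Type*} {s : Finset ι}
    {f : ι → Finset α} {S : Finset α} {K : ℝ} (hf : (s : Set ι).PairwiseDisjoint f)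
    (hsub : ∀ i ∈ s, f i ⊆ S) (hK : ∀ i ∈ s, K ≤ #(f i)) : K * #s ≤ #S := by
  calc K * #s = ∑ _i ∈ s, K := by rw [sum_const, nsmul_eq_mul, mul_comm]
    _ ≤ ∑ i ∈ s, (#(f i) : ℝ) := sum_le_sum hK
    _ = #(s.biUnion f) := by rw [card_biUnion hf]; push_cast; rfl
    _ ≤ #S := by exact_mod_cast card_le_card (biUnion_subset.mpr hsub)

/-- The set `{z} ∪ C_z`. -/
def pieceCone (n : α → ℕ) (C : α → ℕ → Finset α) (z : α) : Finset α :=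
  insert z ((Icc 1 (n z)).biUnion (C z))

/-- The alternatives (i)–(iv) for the pair `z, z'`. -/
def PiecesCompatible (n : α → ℕ) (C : α → ℕ → Finset α) (z z' : α) : Prop :=
  Disjoint (pieceCone n C z) (pieceCone n C z') ∨
  (∃ i ∈ Icc 1 (n z), ∃ j ∈ Icc 1 (n z'),
    pieceCone n C z' \ C z' j ⊆ C z i ∧ pieceCone n C z \ C z i ⊆ C z' j) ∨
  (∃ i ∈ Icc 1 (n z), pieceCone n C z' ⊆ C z i) ∨
  (∃ j ∈ Icc 1 (n z'), pieceCone n C z ⊆ C z' j)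

structure IsCompatibleFamily (R : Finset α) (n : α → ℕ) (C : α → ℕ → Finset α) : Prop where
  not_mem : ∀ z ∈ R, ∀ i ∈ Icc 1 (n z), z ∉ C z i
  disjoint : ∀ z ∈ R, ∀ i ∈ Icc 1 (n z), ∀ j ∈ Icc 1 (n z), i ≠ j → Disjoint (C z i) (C z j)
  compatible : ∀ z ∈ R, ∀ z' ∈ R, z ≠ z' → PiecesCompatible n C z z'

def freePieces (R : Finset α) (n : α → ℕ) (C : α → ℕ → Finset α) (z : α) : Finset ℕ :=
  {i ∈ Icc 1 (n z) | Disjoint R (C z i)}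

variable {R : Finset α} {n : α → ℕ} {C : α → ℕ → Finset α} {z z' z₀ : α} {i j : ℕ}

theorem mem_freePieces : i ∈ freePieces R n C z ↔ i ∈ Icc 1 (n z) ∧ Disjoint R (C z i) :=
  mem_filter

theorem subset_pieceCone (hi : i ∈ Icc 1 (n z)) : C z i ⊆ pieceCone n C z :=
  (subset_biUnion_of_mem (C z) hi).trans (subset_insert _ _)

theorem mem_pieceCone_self : z ∈ pieceCone n C z :=
  mem_insert_self _ _

namespace IsCompatibleFamily

theorem mono (hF : IsCompatibleFamily R n C) {R' : Finset α} (h : R' ⊆ R) :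
    IsCompatibleFamily R' n C :=
  ⟨fun z hz => hF.not_mem z (h hz), fun z hz => hF.disjoint z (h hz),
    fun z hz z' hz' => hF.compatible z (h hz) z' (h hz')⟩

theorem eq_of_mem_of_mem (hF : IsCompatibleFamily R n C) (hz : z ∈ R) (hi : i ∈ Icc 1 (n z))
    (hj : j ∈ Icc 1 (n z)) {x : α} (hxi : x ∈ C z i) (hxj : x ∈ C z j) : i = j := by
  by_contra h
  exact disjoint_left.mp (hF.disjoint z hz i hi j hj h) hxi hxj

theorem disjoint_of_mem_freePieces (hF : IsCompatibleFamily R n C) (hz : z ∈ R) (hz' : z' ∈ R)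
    (hzz' : z ≠ z') {i' : ℕ} (hi : i ∈ freePieces R n C z) (hi' : i' ∈ freePieces R n C z') :
    Disjoint (C z i) (C z' i') := by
  obtain ⟨hi, hfree⟩ := mem_freePieces.mp hi
  obtain ⟨hi', hfree'⟩ := mem_freePieces.mp hi'
  have hne {w k} (hw : w ∈ R) (hk : k ∈ Icc 1 (n z)) (hwk : w ∈ C z k) : i ≠ k := by
    rintro rfl; exact disjoint_left.mp hfree hw hwk
  have hne' {w k} (hw : w ∈ R) (hk : k ∈ Icc 1 (n z')) (hwk : w ∈ C z' k) : i' ≠ k := by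
    rintro rfl; exact disjoint_left.mp hfree' hw hwk
  rcases hF.compatible z hz z' hz' hzz' with h | ⟨a, ha, b, hb, h₁, h₂⟩ | ⟨a, ha, h⟩ | ⟨b, hb, h⟩
  · exact h.mono (subset_pieceCone hi) (subset_pieceCone hi')
  · have hia := hne hz' ha (h₁ (mem_sdiff.mpr ⟨mem_pieceCone_self, hF.not_mem z' hz' b hb⟩))
    have hib := hne' hz hb (h₂ (mem_sdiff.mpr ⟨mem_pieceCone_self, hF.not_mem z hz a ha⟩))
    have hsub : C z i ⊆ C z' b := fun x hx => h₂ (mem_sdiff.mpr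
      ⟨subset_pieceCone hi hx, disjoint_left.mp (hF.disjoint z hz i hi a ha hia) hx⟩)
    exact ((hF.disjoint z' hz' i' hi' b hb hib).mono_right hsub).symm
  · have hia := hne hz' ha (h mem_pieceCone_self)
    exact (hF.disjoint z hz i hi a ha hia).mono_right ((subset_pieceCone hi').trans h)
  · have hib := hne' hz hb (h mem_pieceCone_self)
    exact ((hF.disjoint z' hz' i' hi' b hb hib).mono_right ((subset_pieceCone hi).trans h)).symm

theorem exists_forall_ne_subset (hF : IsCompatibleFamily R n C) (hz : z ∈ R) (hz₀ : z₀ ∈ R)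
    (hi : i ∈ Icc 1 (n z)) (hz₀i : z₀ ∈ C z i) :
    ∃ j, ∀ k ∈ Icc 1 (n z₀), k ≠ j → C z₀ k ⊆ C z i := by
  have hzz₀ : z ≠ z₀ := by rintro rfl; exact hF.not_mem z hz i hi hz₀i
  rcases hF.compatible z hz z₀ hz₀ hzz₀ with h | ⟨a, ha, b, hb, h₁, -⟩ | ⟨a, ha, h⟩ | ⟨b, hb, h⟩
  · exact absurd mem_pieceCone_self (disjoint_left.mp h (subset_pieceCone hi hz₀i))
  · obtain rfl : a = i := hF.eq_of_mem_of_mem hz ha hi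
      (h₁ (mem_sdiff.mpr ⟨mem_pieceCone_self, hF.not_mem z₀ hz₀ b hb⟩)) hz₀i
    exact ⟨b, fun k hk hkb x hx => h₁ (mem_sdiff.mpr
      ⟨subset_pieceCone hk hx, disjoint_left.mp (hF.disjoint z₀ hz₀ k hk b hb hkb) hx⟩)⟩
  · obtain rfl : a = i := hF.eq_of_mem_of_mem hz ha hi (h mem_pieceCone_self) hz₀i
    exact ⟨0, fun k hk _ => (subset_pieceCone hk).trans h⟩
  · exact absurd (h (subset_pieceCone hi hz₀i)) (hF.not_mem z₀ hz₀ b hb)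

theorem exists_two_le_card_freePieces (hF : IsCompatibleFamily R n C) (hn : ∀ z ∈ R, 3 ≤ n z)
    (hocc : ∃ z ∈ R, ∃ i ∈ Icc 1 (n z), ¬Disjoint R (C z i)) :
    ∃ z₀ ∈ R, 2 ≤ #(freePieces R n C z₀) ∧ (R.erase z₀).Nonempty := by
  set occupied := R.sigma fun z => {i ∈ Icc 1 (n z) | ¬Disjoint R (C z i)}
  have hmem {z i} : (⟨z, i⟩ : Σ _ : α, ℕ) ∈ occupied ↔
      z ∈ R ∧ i ∈ Icc 1 (n z) ∧ ¬Disjoint R (C z i) := by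
    simp only [occupied, mem_sigma, mem_filter]
  obtain ⟨z, hz, i, hi, hzi⟩ := hocc
  obtain ⟨⟨z, i⟩, hzi, hmin⟩ :=
    occupied.exists_min_image (fun p => #(C p.1 p.2)) ⟨⟨z, i⟩, hmem.mpr ⟨hz, hi, hzi⟩⟩
  obtain ⟨hz, hi, hzi⟩ := hmem.mp hzi
  obtain ⟨z₀, hz₀, hz₀i⟩ := not_disjoint_iff.mp hzi
  have hzz₀ : z ≠ z₀ := by rintro rfl; exact hF.not_mem z hz i hi hz₀i
  obtain ⟨j, hj⟩ := hF.exists_forall_ne_subset hz hz₀ hi hz₀i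
  have hfree : (Icc 1 (n z₀)).erase j ⊆ freePieces R n C z₀ := by
    intro k hk
    obtain ⟨hkj, hk⟩ := mem_erase.mp hk
    refine mem_freePieces.mpr ⟨hk, not_not.mp fun hkocc => ?_⟩
    have hlt : #(C z₀ k) < #(C z i) := card_lt_card <| (ssubset_iff_of_subset (hj k hk hkj)).mpr
      ⟨z₀, hz₀i, hF.not_mem z₀ hz₀ k hk⟩
    exact (hmin ⟨z₀, k⟩ (hmem.mpr ⟨hz₀, hk, hkocc⟩)).not_gt hlt
  refine ⟨z₀, hz₀, ?_, z, mem_erase.mpr ⟨hzz₀, hz⟩⟩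
  calc 2 ≤ #(Icc 1 (n z₀)) - 1 := by have := hn z₀ hz₀; simp only [Nat.card_Icc]; omega
    _ ≤ #((Icc 1 (n z₀)).erase j) := pred_card_le_card_erase
    _ ≤ #(freePieces R n C z₀) := card_le_card hfree

/-- Pieces freed by removing `z₀` from `R` contain `z₀`; two of them would have to meet in `z₀`,
which compatibility rules out unless they belong to the same centre. -/
theorem eq_of_mem_freePieces_erase (hF : IsCompatibleFamily R n C) {w u : α} {p q : ℕ}
    (hw : w ∈ R.erase z₀) (hu : u ∈ R.erase z₀) (hp : p ∈ freePieces (R.erase z₀) n C w)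
    (hq : q ∈ freePieces (R.erase z₀) n C u) (hz₀p : z₀ ∈ C w p) (hz₀q : z₀ ∈ C u q) :
    w = u := by
  obtain ⟨hp, hpfree⟩ := mem_freePieces.mp hp
  obtain ⟨hq, hqfree⟩ := mem_freePieces.mp hq
  have hwR := mem_of_mem_erase hw
  have huR := mem_of_mem_erase hu
  by_contra hwu
  rcases hF.compatible w hwR u huR hwu with h | ⟨a, ha, b, hb, h₁, h₂⟩ | ⟨a, ha, h⟩ | ⟨b, hb, h⟩
  · exact disjoint_left.mp h (subset_pieceCone hp hz₀p) (subset_pieceCone hq hz₀q)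
  · by_cases hpa : p = a
    · subst hpa
      exact disjoint_left.mp hpfree hu
        (h₁ (mem_sdiff.mpr ⟨mem_pieceCone_self, hF.not_mem u huR b hb⟩))
    · have hz₀b : z₀ ∈ C u b := h₂ (mem_sdiff.mpr ⟨subset_pieceCone hp hz₀p,
        disjoint_left.mp (hF.disjoint w hwR p hp a ha hpa) hz₀p⟩)
      obtain rfl : b = q := hF.eq_of_mem_of_mem huR hb hq hz₀b hz₀q
      exact disjoint_left.mp hqfree hw
        (h₂ (mem_sdiff.mpr ⟨mem_pieceCone_self, hF.not_mem w hwR a ha⟩))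
  · obtain rfl : a = p := hF.eq_of_mem_of_mem hwR ha hp (h (subset_pieceCone hq hz₀q)) hz₀p
    exact disjoint_left.mp hpfree hu (h mem_pieceCone_self)
  · obtain rfl : b = q := hF.eq_of_mem_of_mem huR hb hq (h (subset_pieceCone hp hz₀p)) hz₀q
    exact disjoint_left.mp hqfree hw (h mem_pieceCone_self)

theorem sum_card_freePieces_erase_le (hF : IsCompatibleFamily R n C) (hz₀ : z₀ ∈ R) :
    ∑ w ∈ R.erase z₀, #(freePieces (R.erase z₀) n C w) ≤
      ∑ w ∈ R.erase z₀, #(freePieces R n C w) + 1 := by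
  set freed := fun w => {i ∈ freePieces (R.erase z₀) n C w | z₀ ∈ C w i}
  have hsplit (w) : #(freePieces (R.erase z₀) n C w) ≤ #(freePieces R n C w) + #(freed w) := by
    rw [← card_filter_add_card_filter_not (fun i => z₀ ∈ C w i), add_comm]
    refine Nat.add_le_add_right (card_le_card fun i hi => ?_) _
    obtain ⟨hi, hz₀i⟩ := mem_filter.mp hi
    obtain ⟨hi, hfree⟩ := mem_freePieces.mp hi
    rw [mem_freePieces, ← insert_erase hz₀, disjoint_insert_left]
    exact ⟨hi, hz₀i, hfree⟩
  have hfreed : ∑ w ∈ R.erase z₀, #(freed w) ≤ 1 := by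
    rw [← card_sigma]
    refine card_le_one.mpr fun ⟨w, p⟩ hp ⟨u, q⟩ hq => ?_
    obtain ⟨hw, hp, hz₀p⟩ : w ∈ R.erase z₀ ∧ p ∈ freePieces (R.erase z₀) n C w ∧ z₀ ∈ C w p := by
      simpa only [freed, mem_sigma, mem_filter, and_assoc] using hp
    obtain ⟨hu, hq, hz₀q⟩ : u ∈ R.erase z₀ ∧ q ∈ freePieces (R.erase z₀) n C u ∧ z₀ ∈ C u q := by
      simpa only [freed, mem_sigma, mem_filter, and_assoc] using hq
    obtain rfl := hF.eq_of_mem_freePieces_erase hw hu hp hq hz₀p hz₀q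
    obtain rfl := hF.eq_of_mem_of_mem (mem_of_mem_erase hw) (mem_freePieces.mp hp).1
      (mem_freePieces.mp hq).1 hz₀p hz₀q
    rfl
  calc ∑ w ∈ R.erase z₀, #(freePieces (R.erase z₀) n C w)
      ≤ ∑ w ∈ R.erase z₀, (#(freePieces R n C w) + #(freed w)) := sum_le_sum fun w _ => hsplit w
    _ = ∑ w ∈ R.erase z₀, #(freePieces R n C w) + ∑ w ∈ R.erase z₀, #(freed w) := sum_add_distrib
    _ ≤ ∑ w ∈ R.erase z₀, #(freePieces R n C w) + 1 := Nat.add_le_add_left hfreed _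

theorem add_two_le_sum_card_freePieces (hF : IsCompatibleFamily R n C) (hR : R.Nonempty)
    (hn : ∀ z ∈ R, 3 ≤ n z) : #R + 2 ≤ ∑ z ∈ R, #(freePieces R n C z) := by
  induction R using strongInduction with
  | H R ih =>
  by_cases hocc : ∃ z ∈ R, ∃ i ∈ Icc 1 (n z), ¬Disjoint R (C z i)
  · obtain ⟨z₀, hz₀, hfree₀, hR'⟩ := hF.exists_two_le_card_freePieces hn hocc
    have hIH := ih (R.erase z₀) (erase_ssubset hz₀) (hF.mono (erase_subset _ _)) hR'
      fun z hz => hn z (mem_of_mem_erase hz)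
    have hfreed := hF.sum_card_freePieces_erase_le hz₀
    rw [card_erase_of_mem hz₀] at hIH
    rw [← add_sum_erase R _ hz₀]
    have := card_pos.mpr hR
    omega
  · push Not at hocc
    have hall (z) (hz : z ∈ R) : #(freePieces R n C z) = n z := by
      rw [freePieces, filter_true_of_mem (hocc z hz), Nat.card_Icc, Nat.add_sub_cancel]
    calc #R + 2 ≤ #R * 3 := by have := card_pos.mpr hR; omega
      _ ≤ ∑ z ∈ R, n z := by simpa using card_nsmul_le_sum R n 3 hn
      _ = ∑ z ∈ R, #(freePieces R n C z) := (sum_congr rfl hall).symm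

theorem pairwiseDisjoint_freePieces (hF : IsCompatibleFamily R n C) :
    (R.sigma (freePieces R n C) : Set (Σ _ : α, ℕ)).PairwiseDisjoint fun p => C p.1 p.2 := by
  rintro ⟨z, i⟩ hi ⟨z', i'⟩ hi' hne
  simp only [coe_sigma, Set.mem_sigma_iff, mem_coe] at hi hi'
  by_cases hzz' : z = z'
  · subst hzz'
    exact hF.disjoint z hi.1 i (mem_freePieces.mp hi.2).1 i' (mem_freePieces.mp hi'.2).1
      fun h => hne (h ▸ rfl)
  · exact hF.disjoint_of_mem_freePieces hi.1 hi'.1 hzz' hi.2 hi'.2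

end IsCompatibleFamily

end

theorem statement4_general {α : Type*} [DecidableEq α] (S R : Finset α)
    (hR : R.Nonempty) (K : ℝ) (hK : 0 < K) (n : α → ℕ) (C : α → ℕ → Finset α)
    (hn : ∀ z ∈ R, 3 ≤ n z)
    (hsub : ∀ z ∈ R, ∀ i ∈ Finset.Icc 1 (n z), C z i ⊆ S)
    (hnotmem : ∀ z ∈ R, ∀ i ∈ Finset.Icc 1 (n z), z ∉ C z i)
    (hcard : ∀ z ∈ R, ∀ i ∈ Finset.Icc 1 (n z), K ≤ ((C z i).card : ℝ))
    (hdisj : ∀ z ∈ R, ∀ i ∈ Finset.Icc 1 (n z), ∀ j ∈ Finset.Icc 1 (n z), i ≠ j →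
      Disjoint (C z i) (C z j))
    (hcases : ∀ z ∈ R, ∀ z' ∈ R, z ≠ z' →
      Disjoint (insert z ((Finset.Icc 1 (n z)).biUnion (C z)))
               (insert z' ((Finset.Icc 1 (n z')).biUnion (C z'))) ∨
      (∃ i ∈ Finset.Icc 1 (n z), ∃ j ∈ Finset.Icc 1 (n z'),
        insert z' ((Finset.Icc 1 (n z')).biUnion (C z')) \ C z' j ⊆ C z i ∧
        insert z ((Finset.Icc 1 (n z)).biUnion (C z)) \ C z i ⊆ C z' j) ∨
      (∃ i ∈ Finset.Icc 1 (n z),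
        insert z' ((Finset.Icc 1 (n z')).biUnion (C z')) ⊆ C z i) ∨
      (∃ j ∈ Finset.Icc 1 (n z'),
        insert z ((Finset.Icc 1 (n z)).biUnion (C z)) ⊆ C z' j)) :
    K * ((R.card : ℝ) + 2) ≤ (S.card : ℝ) := by
  have hF : IsCompatibleFamily R n C := ⟨hnotmem, hdisj, hcases⟩
  have hcount : #R + 2 ≤ #(R.sigma (freePieces R n C)) := by
    rw [card_sigma]; exact hF.add_two_le_sum_card_freePieces hR hn
  have hfree {p : Σ _ : α, ℕ} (hp : p ∈ R.sigma (freePieces R n C)) :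
      p.1 ∈ R ∧ p.2 ∈ Icc 1 (n p.1) :=
    ⟨(mem_sigma.mp hp).1, (mem_freePieces.mp (mem_sigma.mp hp).2).1⟩
  calc K * ((#R : ℝ) + 2) ≤ K * #(R.sigma (freePieces R n C)) := by
        gcongr; exact_mod_cast hcount
    _ ≤ #S := mul_card_le_card_of_pairwiseDisjoint hF.pairwiseDisjoint_freePieces
        (fun p hp => hsub _ (hfree hp).1 _ (hfree hp).2)
        (fun p hp => hcard _ (hfree hp).1 _ (hfree hp).2)

/-- The counting lemma of Gandolfi, Keane and Newman (Lemma 4.2 in [GKN92]).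
`S` is a finite set, `R ⊆ S` non-empty, `K > 0`. For each `z ∈ R` there is a family
`C z 1, …, C z (n z)` (with `n z ≥ 3`) of pairwise disjoint non-empty subsets of `S`,
none containing `z`, each of cardinality at least `K`; and for all distinct `z, z' ∈ R`
one of the four compatibility cases (i)–(iv) holds (with `Cz = ⋃_{i=1}^{n z} C z i`).
Then `|S| ≥ K(|R| + 2)`. -/
theorem statement4 {α : Type*} [DecidableEq α] (S R : Finset α) (hRS : R ⊆ S)
    (hR : R.Nonempty) (K : ℝ) (hK : 0 < K) (n : α → ℕ) (C : α → ℕ → Finset α)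
    (hn : ∀ z ∈ R, 3 ≤ n z)
    (hsub : ∀ z ∈ R, ∀ i ∈ Finset.Icc 1 (n z), C z i ⊆ S)
    (hne : ∀ z ∈ R, ∀ i ∈ Finset.Icc 1 (n z), (C z i).Nonempty)
    (hnotmem : ∀ z ∈ R, ∀ i ∈ Finset.Icc 1 (n z), z ∉ C z i)
    (hcard : ∀ z ∈ R, ∀ i ∈ Finset.Icc 1 (n z), K ≤ ((C z i).card : ℝ))
    (hdisj : ∀ z ∈ R, ∀ i ∈ Finset.Icc 1 (n z), ∀ j ∈ Finset.Icc 1 (n z), i ≠ j →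
      Disjoint (C z i) (C z j))
    (hcases : ∀ z ∈ R, ∀ z' ∈ R, z ≠ z' →
      Disjoint (insert z ((Finset.Icc 1 (n z)).biUnion (C z)))
               (insert z' ((Finset.Icc 1 (n z')).biUnion (C z'))) ∨
      (∃ i ∈ Finset.Icc 1 (n z), ∃ j ∈ Finset.Icc 1 (n z'),
        insert z' ((Finset.Icc 1 (n z')).biUnion (C z')) \ C z' j ⊆ C z i ∧
        insert z ((Finset.Icc 1 (n z)).biUnion (C z)) \ C z i ⊆ C z' j) ∨
      (∃ i ∈ Finset.Icc 1 (n z),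
        insert z' ((Finset.Icc 1 (n z')).biUnion (C z')) ⊆ C z i) ∨
      (∃ j ∈ Finset.Icc 1 (n z'),
        insert z ((Finset.Icc 1 (n z)).biUnion (C z)) ⊆ C z' j)) :
    K * ((R.card : ℝ) + 2) ≤ (S.card : ℝ) :=
  statement4_general S R hR K hK n C hn hsub hnotmem hcard hdisj hcases
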